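/- Let H ∈ (0,1) and let u, v be reals with 0 < v < u. Then u^{2H}·v^{2H} − (1/4)·(u^{2H} + v^{2H} − (u − v)^{2H})² > 0; equivalently, (u^{2H} + v^{2H} − (u−v)^{2H})² < 4·u^{2H}·v^{2H}. -/

import Mathlib

/-!
Put `x = u^H`, `y = v^H`, `z = (u - v)^H`. Since `t ↦ t^H` is strictly increasing and strictly
subadditive, `x, y, z` are the side lengths of a nondegenerate triangle, and then
`4x²y² - (x² + y² - z²)² = (z² - (x - y)²)((x + y)² - z²)` is positive (Heron's formula).
-/

namespace Real

lemma rpow_add_lt_add_rpow {p a b : ℝ} (hp : p < 1) (ha : 0 < a) (hb : 0 < b) :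
    (a + b) ^ p < a ^ p + b ^ p := by
  have hab : 0 < a + b := add_pos ha hb
  have hpow (t : ℝ) (ht : 0 < t) : t ^ p = t ^ (p - 1) * t := by
    rw [← rpow_add_one ht.ne', sub_add_cancel]
  have hlt_a : (a + b) ^ (p - 1) < a ^ (p - 1) :=
    rpow_lt_rpow_of_neg ha (lt_add_of_pos_right a hb) (by linarith)
  have hlt_b : (a + b) ^ (p - 1) < b ^ (p - 1) :=
    rpow_lt_rpow_of_neg hb (lt_add_of_pos_left b ha) (by linarith)
  calc (a + b) ^ p = (a + b) ^ (p - 1) * a + (a + b) ^ (p - 1) * b := by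
        rw [hpow _ hab, mul_add]
    _ < a ^ (p - 1) * a + b ^ (p - 1) * b := by gcongr
    _ = a ^ p + b ^ p := by rw [hpow _ ha, hpow _ hb]

end Real

lemma sq_add_sq_sub_sq_sq_lt {x y z : ℝ} (h_sub : |x - y| < z) (h_add : z < x + y) :
    (x ^ 2 + y ^ 2 - z ^ 2) ^ 2 < 4 * (x ^ 2 * y ^ 2) := by
  have heron : 4 * (x ^ 2 * y ^ 2) - (x ^ 2 + y ^ 2 - z ^ 2) ^ 2 =
      (z ^ 2 - (x - y) ^ 2) * ((x + y) ^ 2 - z ^ 2) := by ring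
  have h₁ : 0 < z ^ 2 - (x - y) ^ 2 := by
    rw [sub_pos, ← sq_abs (x - y)]
    exact pow_lt_pow_left₀ h_sub (abs_nonneg _) two_ne_zero
  have h₂ : 0 < (x + y) ^ 2 - z ^ 2 :=
    sub_pos.mpr (pow_lt_pow_left₀ h_add ((abs_nonneg _).trans h_sub.le) two_ne_zero)
  linarith [mul_pos h₁ h₂]

theorem phi_pos (H : ℝ) (hH : H ∈ Set.Ioo (0:ℝ) 1) (u v : ℝ) (hv : 0 < v) (hvu : v < u) :
    0 < u ^ (2 * H) * v ^ (2 * H) -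
        1/4 * (u ^ (2 * H) + v ^ (2 * H) - (u - v) ^ (2 * H)) ^ 2 ∧
      (u ^ (2 * H) + v ^ (2 * H) - (u - v) ^ (2 * H)) ^ 2 <
        4 * (u ^ (2 * H) * v ^ (2 * H)) := by
  obtain ⟨hH₀, hH₁⟩ := hH
  have hu : 0 < u := hv.trans hvu
  have hw : 0 < u - v := sub_pos.mpr hvu
  have hsq (t : ℝ) (ht : 0 < t) : t ^ (2 * H) = (t ^ H) ^ 2 := by
    rw [mul_comm, ← Real.rpow_mul_natCast ht.le]; norm_num
  have hvu_pow : v ^ H < u ^ H := Real.rpow_lt_rpow hv.le hvu hH₀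
  have hwu_pow : (u - v) ^ H < u ^ H := Real.rpow_lt_rpow hw.le (sub_lt_self u hv) hH₀
  have hsubadd : u ^ H < (u - v) ^ H + v ^ H := by
    simpa using Real.rpow_add_lt_add_rpow hH₁ hw hv
  have key : ((u ^ H) ^ 2 + (v ^ H) ^ 2 - ((u - v) ^ H) ^ 2) ^ 2 <
      4 * ((u ^ H) ^ 2 * (v ^ H) ^ 2) :=
    sq_add_sq_sub_sq_sq_lt
      (abs_sub_lt_iff.mpr ⟨by linarith, by linarith [Real.rpow_pos_of_pos hw H]⟩)
      (by linarith [Real.rpow_pos_of_pos hv H])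
  rw [hsq u hu, hsq v hv, hsq (u - v) hw]
  exact ⟨by linarith, key⟩
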